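/- Let θ be a real 2×2 matrix, η ∈ ℝ², p ∈ ℝ², and let (z, w, φ) be as above with sin φ(t) = ⟨p, exp(z(t)θ)η⟩, φ continuous. If there exists T > 0 with ⟨p, w(T)⟩ = 0, then sin φ(t) = 0 for all t ∈ [0, T]. -/

import Mathlib

/-! Since `sin φ = ⟨p, exp(zθ)η⟩`, pairing the integrand of `w` with `p` gives `sin² φ`, so
`⟨p, w(T)⟩ = ∫₀^T sin² φ`. A continuous nonnegative function with vanishing integral over
`[0, T]` vanishes on `[0, T]`. -/

open Real Matrix

/-- The horizontal `ℝ`-component: `z(t) = ∫₀^t cos φ(s) ds`. -/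
noncomputable def zComp (φ : ℝ → ℝ) (t : ℝ) : ℝ :=
  ∫ s in (0 : ℝ)..t, cos (φ s)

/-- The horizontal `ℝ²`-component: `w(t) = ∫₀^t sin φ(s) · exp(z(s)θ)η ds`. -/
noncomputable def wComp (θ : Matrix (Fin 2) (Fin 2) ℝ) (η : Fin 2 → ℝ)
    (φ : ℝ → ℝ) (t : ℝ) : Fin 2 → ℝ :=
  ∫ s in (0 : ℝ)..t, sin (φ s) • (NormedSpace.exp (zComp φ s • θ)).mulVec η

open MeasureTheory

theorem Matrix.continuous_exp {m 𝕂 : Type*} [Fintype m] [DecidableEq m] [RCLike 𝕂] :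
    Continuous (NormedSpace.exp : Matrix m m 𝕂 → Matrix m m 𝕂) :=
  open scoped Norms.Operator in NormedSpace.exp_continuous

theorem dotProduct_intervalIntegral {ι 𝕜 : Type*} [Fintype ι] [RCLike 𝕜] (p : ι → 𝕜)
    {f : ℝ → ι → 𝕜} {a b : ℝ} (hf : IntervalIntegrable f volume a b) :
    p ⬝ᵥ ∫ x in a..b, f x = ∫ x in a..b, p ⬝ᵥ f x :=
  ((dotProductBilin 𝕜 𝕜 p).toContinuousLinearMap.intervalIntegral_comp_comm hf).symm

theorem eqOn_zero_of_intervalIntegral_eq_zero {f : ℝ → ℝ} {a b : ℝ} (hab : a < b)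
    (hf : ContinuousOn f (Set.Icc a b)) (hf₀ : ∀ x ∈ Set.Icc a b, 0 ≤ f x)
    (hint : ∫ x in a..b, f x = 0) : Set.EqOn f 0 (Set.Icc a b) := by
  have hf₀' : 0 ≤ᵐ[volume.restrict (Set.Ioc a b)] f :=
    (ae_restrict_iff' measurableSet_Ioc).2 <|
      .of_forall fun x hx => hf₀ x (Set.Ioc_subset_Icc_self hx)
  have hae : f =ᵐ[volume.restrict (Set.Ioc a b)] 0 :=
    (intervalIntegral.integral_eq_zero_iff_of_le_of_nonneg_ae hab.le hf₀'
      (hf.intervalIntegrable_of_Icc hab.le)).1 hint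
  rw [Measure.restrict_congr_set Ioc_ae_eq_Icc] at hae
  exact Measure.eqOn_Icc_of_ae_eq volume hab.ne hae hf continuousOn_const

theorem continuous_zComp {φ : ℝ → ℝ} (hφ : Continuous φ) : Continuous (zComp φ) :=
  intervalIntegral.continuous_primitive
    (fun a b => (continuous_cos.comp hφ).intervalIntegrable a b) 0

theorem dotProduct_wComp_eq_integral_sin_sq {θ : Matrix (Fin 2) (Fin 2) ℝ} {η p : Fin 2 → ℝ}
    {φ : ℝ → ℝ} (hφ : Continuous φ)
    (hsin : ∀ t : ℝ, sin (φ t) = p ⬝ᵥ (NormedSpace.exp (zComp φ t • θ)).mulVec η) (t : ℝ) :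
    p ⬝ᵥ wComp θ η φ t = ∫ s in (0 : ℝ)..t, sin (φ s) ^ 2 := by
  have hcont : Continuous fun s => sin (φ s) • (NormedSpace.exp (zComp φ s • θ)).mulVec η :=
    (continuous_sin.comp hφ).smul <| (Matrix.continuous_exp.comp
      ((continuous_zComp hφ).smul continuous_const)).matrix_mulVec continuous_const
  rw [wComp, dotProduct_intervalIntegral p (hcont.intervalIntegrable 0 t)]
  simp only [dotProduct_smul, smul_eq_mul, ← hsin, sq]

/-- Along a normal extremal, where `sin φ(t) = ⟨p, exp(z(t)θ)η⟩` with `p` constant,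
if `⟨p, w(T)⟩ = 0` for some `T > 0`, then `sin φ(t) = 0` for all `t ∈ [0, T]`. -/
theorem sin_vanishes_of_inner_w_zero (θ : Matrix (Fin 2) (Fin 2) ℝ) (η p : Fin 2 → ℝ)
    (φ : ℝ → ℝ) (hφ : Continuous φ)
    (hsin : ∀ t : ℝ, sin (φ t) = p ⬝ᵥ (NormedSpace.exp (zComp φ t • θ)).mulVec η)
    (T : ℝ) (hT : 0 < T) (hw : p ⬝ᵥ wComp θ η φ T = 0) :
    ∀ t ∈ Set.Icc 0 T, sin (φ t) = 0 := by
  intro t ht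
  have hsq : Set.EqOn (fun s => sin (φ s) ^ 2) 0 (Set.Icc 0 T) :=
    eqOn_zero_of_intervalIntegral_eq_zero hT ((continuous_sin.comp hφ).pow 2).continuousOn
      (fun _ _ => sq_nonneg _) ((dotProduct_wComp_eq_integral_sin_sq hφ hsin T).symm.trans hw)
  exact pow_eq_zero_iff two_ne_zero |>.1 (hsq ht)
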